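/- For the function Θ(x, z) := ∫_{ℝ²} |K(x−y)| p(y) dy, where |K(w)| ≤ C₀/|w| and p is a probability density on ℝ² satisfying p(y) ≤ (M/(2πσ²)) e^{−|y−z|²/(Mσ²)}, there exists a constant C (depending only on C₀ and M) such that |Θ(x, z)| ≤ C/|x − z| for all x ≠ z. -/

import Mathlib

/-! Split `∫ |K(x−y)| p(y) dy` at the disc of radius `r = |x−z|/2` around `x`. Outside it
`|K| ≤ C₀/r` and `p` has mass one. Inside it `y` stays at distance `≥ r` from `z`, so `p` is at most
its Gaussian bound at distance `r`, while `∫_{|w|<r} |w|⁻¹ dw = 2πr`, and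
`2πr · (M/(2πσ²)) e^{−r²/(Mσ²)} = (M²/r) u e^{−u} ≤ M²/r` with `u = r²/(Mσ²)`. -/

open MeasureTheory Metric Set Real

lemma setIntegral_ball_inv_norm_fin_two {r : ℝ} (hr : 0 ≤ r) :
    ∫ w in ball (0 : EuclideanSpace ℝ (Fin 2)) r, ‖w‖⁻¹ = 2 * π * r := by
  have hradial : (ball (0 : EuclideanSpace ℝ (Fin 2)) r).indicator (fun w => ‖w‖⁻¹) =
      fun w => (Iio r).indicator (·⁻¹) ‖w‖ := by
    ext w; simp [indicator]
  have hline : ∫ t in Ioi (0 : ℝ), t ^ (2 - 1) • (Iio r).indicator (·⁻¹) t = r := by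
    rw [← integral_indicator measurableSet_Ioi]
    calc _ = ∫ t, (Ioo 0 r).indicator 1 t := by
          congr 1; ext t
          by_cases h0 : 0 < t <;> by_cases h1 : t < r <;> simp [indicator, h0, h1, ne_of_gt]
      _ = r := by simp [integral_indicator measurableSet_Ioo, hr]
  rw [← integral_indicator measurableSet_ball, hradial, integral_fun_norm_addHaar,
    finrank_euclideanSpace_fin, hline]
  simp [Measure.real, ENNReal.toReal_ofReal pi_nonneg]
  ring

lemma integrableOn_ball_inv_norm_fin_two (r : ℝ) :
    IntegrableOn (fun w : EuclideanSpace ℝ (Fin 2) => ‖w‖⁻¹) (ball 0 r) :=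
  integrableOn_ball_of_norm_le_rpow (by simp) (α := 1) (C := 1) (by simp)
    (.of_forall fun w => by simp [rpow_neg_one]) (by fun_prop)

section KernelBounds

variable {F : Type*} [NormedAddCommGroup F]

lemma setIntegral_compl_ball_norm_mul_le {E : Type*} [NormedAddCommGroup E] [MeasurableSpace E]
    [OpensMeasurableSpace E] {μ : Measure E} {K : E → F} {q : E → ℝ} {C₀ r : ℝ}
    (hC₀ : 0 ≤ C₀) (hr : 0 < r) (hK : ∀ w, w ≠ 0 → ‖K w‖ ≤ C₀ / ‖w‖)
    (hq0 : ∀ w, 0 ≤ q w) (hq : Integrable q μ) :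
    ∫ w in (ball 0 r)ᶜ, ‖K w‖ * q w ∂μ ≤ C₀ / r * ∫ w, q w ∂μ := by
  have hfar : ∀ w ∈ (ball (0 : E) r)ᶜ, ‖K w‖ * q w ≤ C₀ / r * q w := by
    intro w hw
    have hrw : r ≤ ‖w‖ := by simpa using hw
    have hw0 : w ≠ 0 := norm_pos_iff.mp (hr.trans_le hrw)
    gcongr
    · exact hq0 w
    · exact (hK w hw0).trans (by gcongr)
  calc ∫ w in (ball 0 r)ᶜ, ‖K w‖ * q w ∂μ ≤ ∫ w in (ball 0 r)ᶜ, C₀ / r * q w ∂μ :=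
        integral_mono_of_nonneg (.of_forall fun w => mul_nonneg (norm_nonneg _) (hq0 w))
          (hq.const_mul _).integrableOn ((ae_restrict_iff' measurableSet_ball.compl).2
            (.of_forall hfar))
    _ ≤ ∫ w, C₀ / r * q w ∂μ :=
        setIntegral_le_integral (hq.const_mul _) (.of_forall fun w => by
          have := hq0 w; positivity)
    _ = C₀ / r * ∫ w, q w ∂μ := integral_const_mul _ _

lemma setIntegral_ball_norm_mul_le {K : EuclideanSpace ℝ (Fin 2) → F}
    {q : EuclideanSpace ℝ (Fin 2) → ℝ} {C₀ r P : ℝ} (hr : 0 ≤ r)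
    (hK : ∀ w, w ≠ 0 → ‖K w‖ ≤ C₀ / ‖w‖) (hq0 : ∀ w, 0 ≤ q w)
    (hqP : ∀ w ∈ ball 0 r, q w ≤ P) :
    ∫ w in ball 0 r, ‖K w‖ * q w ≤ C₀ * (2 * π * r * P) := by
  have hnear : ∀ᵐ w ∂volume.restrict (ball 0 r), ‖K w‖ * q w ≤ C₀ * P * ‖w‖⁻¹ := by
    filter_upwards [ae_restrict_mem measurableSet_ball,
      ae_restrict_of_ae (Measure.ae_ne volume 0)] with w hw hw0
    calc ‖K w‖ * q w ≤ C₀ / ‖w‖ * P :=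
          mul_le_mul (hK w hw0) (hqP w hw) (hq0 w) ((norm_nonneg _).trans (hK w hw0))
      _ = C₀ * P * ‖w‖⁻¹ := by ring
  calc ∫ w in ball 0 r, ‖K w‖ * q w ≤ ∫ w in ball 0 r, C₀ * P * ‖w‖⁻¹ :=
        integral_mono_of_nonneg (.of_forall fun w => mul_nonneg (norm_nonneg _) (hq0 w))
          ((integrableOn_ball_inv_norm_fin_two r).const_mul _) hnear
    _ = C₀ * (2 * π * r * P) := by
        rw [integral_const_mul, setIntegral_ball_inv_norm_fin_two hr]
        ring

theorem integral_norm_mul_le_of_le_on_ball {K : EuclideanSpace ℝ (Fin 2) → F}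
    {q : EuclideanSpace ℝ (Fin 2) → ℝ} {C₀ r P : ℝ} (hC₀ : 0 ≤ C₀) (hr : 0 < r)
    (hK : ∀ w, w ≠ 0 → ‖K w‖ ≤ C₀ / ‖w‖) (hq0 : ∀ w, 0 ≤ q w) (hq : Integrable q)
    (hqP : ∀ w ∈ ball 0 r, q w ≤ P) :
    ∫ w, ‖K w‖ * q w ≤ C₀ * (2 * π * r * P) + C₀ / r * ∫ w, q w := by
  by_cases hint : Integrable fun w => ‖K w‖ * q w
  · rw [← integral_add_compl measurableSet_ball hint]
    exact add_le_add (setIntegral_ball_norm_mul_le hr.le hK hq0 hqP)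
      (setIntegral_compl_ball_norm_mul_le hC₀ hr hK hq0 hq)
  · have hP : 0 ≤ P := (hq0 0).trans (hqP 0 (mem_ball_self hr))
    rw [integral_undef hint]
    have : 0 ≤ ∫ w, q w := integral_nonneg hq0
    positivity

end KernelBounds

lemma two_pi_mul_gaussian_peak_le {M σ r : ℝ} (hM : 0 < M) (hr : 0 < r) :
    2 * π * r * (M / (2 * π * σ ^ 2) * exp (-r ^ 2 / (M * σ ^ 2))) ≤ M ^ 2 / r := by
  set u := r ^ 2 / (M * σ ^ 2)
  have hu : u * exp (-u) ≤ 1 :=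
    (mul_exp_neg_le_exp_neg_one u).trans (exp_le_one_iff.2 (by norm_num))
  calc 2 * π * r * (M / (2 * π * σ ^ 2) * exp (-r ^ 2 / (M * σ ^ 2)))
      = M ^ 2 / r * (u * exp (-u)) := by
        simp only [u, neg_div]; field_simp
    _ ≤ M ^ 2 / r := mul_le_of_le_one_right (by positivity) hu

/-- If `|K(w)| ≤ C₀/|w|` and `p` is a probability density with Gaussian upper bound
`p(y) ≤ (M/(2πσ²)) e^{−|y−z|²/(Mσ²)}`, then `Θ(x,z) = ∫ |K(x−y)| p(y) dy` satisfies
`Θ(x,z) ≤ C/|x−z|` for a constant `C` depending only on `C₀` and `M`. -/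
theorem smoothed_kernel_bound (C₀ M : ℝ) (hC₀ : 0 < C₀) (hM : 0 < M) :
    ∃ C : ℝ, 0 < C ∧
      ∀ (σ : ℝ), 0 < σ →
      ∀ (K : EuclideanSpace ℝ (Fin 2) → EuclideanSpace ℝ (Fin 2))
        (p : EuclideanSpace ℝ (Fin 2) → ℝ) (z : EuclideanSpace ℝ (Fin 2)),
        (∀ w : EuclideanSpace ℝ (Fin 2), w ≠ 0 → ‖K w‖ ≤ C₀ / ‖w‖) →
        (∀ y, 0 ≤ p y) → (∫ y, p y) = 1 →
        (∀ y, p y ≤ M / (2 * Real.pi * σ ^ 2) * Real.exp (-‖y - z‖ ^ 2 / (M * σ ^ 2))) →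
        ∀ x : EuclideanSpace ℝ (Fin 2), x ≠ z →
          (∫ y, ‖K (x - y)‖ * p y) ≤ C / ‖x - z‖ := by
  refine ⟨2 * C₀ * (M ^ 2 + 1), by positivity, ?_⟩
  intro σ _ K p z hK hp0 hp1 hpb x hxz
  set r := ‖x - z‖ / 2 with hr_def
  have hr : 0 < r := by have := norm_pos_iff.2 (sub_ne_zero.2 hxz); positivity
  set P := M / (2 * π * σ ^ 2) * exp (-r ^ 2 / (M * σ ^ 2)) with hP_def
  have hpP : ∀ w ∈ ball 0 r, p (x - w) ≤ P := by
    intro w hw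
    have hrw : r ≤ ‖x - w - z‖ := by
      rw [mem_ball_zero_iff] at hw
      rw [sub_right_comm]
      linarith [norm_sub_norm_le (x - z) w]
    exact (hpb _).trans (by rw [hP_def]; gcongr)
  have hp : Integrable p := .of_integral_ne_zero (by simp [hp1])
  rw [← integral_sub_left_eq_self _ volume x]
  simp_rw [sub_sub_cancel]
  calc ∫ w, ‖K w‖ * p (x - w) ≤ C₀ * (2 * π * r * P) + C₀ / r * ∫ w, p (x - w) :=
        integral_norm_mul_le_of_le_on_ball hC₀.le hr hK (fun w => hp0 _) (hp.comp_sub_left x) hpP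
    _ ≤ C₀ * (M ^ 2 / r) + C₀ / r := by
        rw [integral_sub_left_eq_self, hp1, mul_one]
        gcongr
        exact two_pi_mul_gaussian_peak_le hM hr
    _ = 2 * C₀ * (M ^ 2 + 1) / ‖x - z‖ := by
        simp only [r]; field_simp
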